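/- arXiv:1612.00785 — 2 statements merged into one kernel-verified Lean document; each statement's English description precedes it below -/
import Mathlib

section
/- Let A ⊆ ℝ^(m+n) be an F_σ set. Then A has nonempty interior if and only if the set { x ∈ ℝ^m : the fiber A_x ⊆ ℝ^n has nonempty interior } is non-meager in ℝ^m. -/
/-!
The projection of the interior of `A` is open and consists of base points whose fiber has
nonempty interior, so when nonempty it is not meagre by Baire's theorem. Conversely, if `A = ⋃ i, F i` has empty
interior, so does every closed `F i`. By Baire's theorem in the fiber, a fiber of `A` with
nonempty interior contains a fiber of some `F i` with nonempty interior. For a closed `F` with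
empty interior those base points are meagre: they are covered by the sets `{x | {x} ×ˢ V ⊆ F}`
for `V` in a countable basis, each closed with empty interior because `F` contains no open box.
-/

open Set TopologicalSpace

variable {X Y : Type*} [TopologicalSpace X] [TopologicalSpace Y]

lemma IsClosed.isMeagre_of_interior_eq_empty {s : Set X} (hs : IsClosed s)
    (h : interior s = ∅) : IsMeagre s :=
  (hs.isNowhereDense_iff.2 h).isMeagre

lemma exists_interior_nonempty_of_interior_iUnion_nonempty [BaireSpace X] {ι : Type*}
    [Countable ι] {f : ι → Set X} (hf : ∀ i, IsClosed (f i))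
    (h : (interior (⋃ i, f i)).Nonempty) : ∃ i, (interior (f i)).Nonempty := by
  by_contra! hempty
  have hmeagre : IsMeagre (⋃ i, f i) :=
    isMeagre_iUnion fun i => (hf i).isMeagre_of_interior_eq_empty (hempty i)
  exact not_isMeagre_of_isOpen isOpen_interior h (hmeagre.mono interior_subset)

def fibersWithInterior (A : Set (X × Y)) : Set X :=
  {x | (interior {y | (x, y) ∈ A}).Nonempty}

lemma fst_image_interior_subset_fibersWithInterior (A : Set (X × Y)) :
    Prod.fst '' interior A ⊆ fibersWithInterior A := by
  rintro _ ⟨⟨x, y⟩, hxy, rfl⟩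
  exact ⟨y, preimage_interior_subset_interior_preimage (Continuous.prodMk_right x) hxy⟩

lemma fibersWithInterior_iUnion_subset [BaireSpace Y] {ι : Type*} [Countable ι]
    {F : ι → Set (X × Y)} (hF : ∀ i, IsClosed (F i)) :
    fibersWithInterior (⋃ i, F i) ⊆ ⋃ i, fibersWithInterior (F i) := by
  intro x hx
  have hfiber : {y | (x, y) ∈ ⋃ i, F i} = ⋃ i, {y | (x, y) ∈ F i} :=
    preimage_iUnion
  obtain ⟨i, hi⟩ := exists_interior_nonempty_of_interior_iUnion_nonempty
    (fun i => (hF i).preimage (Continuous.prodMk_right x)) (hfiber ▸ hx)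
  exact mem_iUnion.2 ⟨i, hi⟩

lemma interior_setOf_prod_subset_eq_empty {F : Set (X × Y)} (hF : interior F = ∅)
    {V : Set Y} (hVo : IsOpen V) (hV : V.Nonempty) :
    interior {x | ∀ y ∈ V, (x, y) ∈ F} = ∅ := by
  refine eq_empty_of_forall_notMem fun x hx => ?_
  obtain ⟨y, hy⟩ := hV
  have hbox : interior {x | ∀ y ∈ V, (x, y) ∈ F} ×ˢ V ⊆ F := by
    rintro ⟨x', y'⟩ ⟨hx', hy'⟩
    exact interior_subset hx' y' hy'
  have hxy : (x, y) ∈ interior F := interior_maximal hbox (isOpen_interior.prod hVo) ⟨hx, hy⟩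
  simp [hF] at hxy

lemma IsClosed.isMeagre_fibersWithInterior [SecondCountableTopology Y] {F : Set (X × Y)}
    (hF : IsClosed F) (hint : interior F = ∅) : IsMeagre (fibersWithInterior F) := by
  obtain ⟨b, hbc, hbne, hb⟩ := exists_countable_basis Y
  have hcover : fibersWithInterior F ⊆ ⋃ V ∈ b, {x | ∀ y ∈ V, (x, y) ∈ F} := by
    rintro x ⟨y, hy⟩
    obtain ⟨V, hVb, -, hVsub⟩ := hb.exists_subset_of_mem_open hy isOpen_interior
    exact mem_biUnion hVb fun z hz => interior_subset (s := {y | (x, y) ∈ F}) (hVsub hz)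
  refine IsMeagre.mono hcover ?_
  have := hbc.to_subtype
  rw [biUnion_eq_iUnion]
  refine isMeagre_iUnion fun V => IsClosed.isMeagre_of_interior_eq_empty ?_ ?_
  · simp only [ofPred_forall]
    exact isClosed_biInter fun y _ => hF.preimage (Continuous.prodMk_left y)
  · exact interior_setOf_prod_subset_eq_empty hint (hb.isOpen V.2)
      (nonempty_iff_ne_empty.2 fun h => hbne (h ▸ V.2))

theorem stmt4 {m n : ℕ} (A : Set ((Fin m → ℝ) × (Fin n → ℝ)))
    (hA : ∃ F : ℕ → Set ((Fin m → ℝ) × (Fin n → ℝ)), (∀ i, IsClosed (F i)) ∧ A = ⋃ i, F i) :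
    (interior A).Nonempty ↔
      ¬ IsMeagre {x : Fin m → ℝ | (interior {y : Fin n → ℝ | (x, y) ∈ A}).Nonempty} := by
  obtain ⟨F, hF, rfl⟩ := hA
  change _ ↔ ¬ IsMeagre (fibersWithInterior _)
  constructor
  · intro hA hmeagre
    exact not_isMeagre_of_isOpen (isOpenMap_fst _ isOpen_interior) (hA.image _)
      (hmeagre.mono (fst_image_interior_subset_fibersWithInterior _))
  · contrapose!
    intro hA
    have hFi : ∀ i, interior (F i) = ∅ := fun i =>
      subset_empty_iff.1 (hA ▸ interior_mono (subset_iUnion F i))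
    exact (isMeagre_iUnion fun i => (hF i).isMeagre_fibersWithInterior (hFi i)).mono
      (fibersWithInterior_iUnion_subset hF)
end

section
/- Let E ⊆ ℝ^n and let A ⊆ ℝ be the set of all coordinates of elements of E (i.e., A = ⋃_{1≤i≤n} π_i(E) where π_i is the i-th coordinate projection). If the Hausdorff dimension of E^k is zero for all k ≥ 1, then the Hausdorff dimension of A^k is zero for all k ≥ 1. -/
/-! Each point of `A^k` arises from a point of `E^k` by choosing one coordinate of each factor,
so `A^k` is a finite union of images of `E^k` under 1-Lipschitz maps, and Lipschitz maps do not
increase Hausdorff dimension. -/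

open Set

lemma setOf_forall_mem_coordinates_eq_iUnion {ι κ X : Type*} (E : Set (κ → X)) :
    {u : ι → X | ∀ j, u j ∈ {a | ∃ x ∈ E, ∃ i, x i = a}} =
      ⋃ f : ι → κ, (fun (v : ι → κ → X) j => v j (f j)) '' {v | ∀ j, v j ∈ E} := by
  ext u
  simp only [mem_ofPred_eq, mem_iUnion, mem_image]
  constructor
  · intro hu
    choose x hx i hi using hu
    exact ⟨i, x, hx, funext hi⟩
  · rintro ⟨f, v, hv, rfl⟩ j
    exact ⟨v j, hv j, f j, rfl⟩

section

variable {ι κ X : Type*} [Fintype ι] [Fintype κ] [EMetricSpace X]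

lemma lipschitzWith_one_eval_comp (f : ι → κ) :
    LipschitzWith 1 fun (v : ι → κ → X) j => v j (f j) :=
  LipschitzWith.of_edist_le fun v w => edist_pi_le_iff.2 fun j =>
    (edist_le_pi_edist (v j) (w j) (f j)).trans (edist_le_pi_edist v w j)

theorem dimH_pow_coordinates_le (E : Set (κ → X)) :
    dimH {u : ι → X | ∀ j, u j ∈ {a | ∃ x ∈ E, ∃ i, x i = a}} ≤
      dimH {v : ι → κ → X | ∀ j, v j ∈ E} := by
  rw [setOf_forall_mem_coordinates_eq_iUnion, dimH_iUnion]
  exact iSup_le fun f => (lipschitzWith_one_eval_comp f).dimH_image_le _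

end

theorem stmt8 {n : ℕ} (E : Set (Fin n → ℝ)) (A : Set ℝ)
    (hA : A = {a : ℝ | ∃ x ∈ E, ∃ i : Fin n, x i = a})
    (h : ∀ k : ℕ, 1 ≤ k → dimH {u : Fin k → (Fin n → ℝ) | ∀ j, u j ∈ E} = 0) :
    ∀ k : ℕ, 1 ≤ k → dimH {u : Fin k → ℝ | ∀ j, u j ∈ A} = 0 := by
  intro k hk
  subst hA
  exact nonpos_iff_eq_zero.1 ((dimH_pow_coordinates_le E).trans (h k hk).le)
end
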